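/- For every integer n ≥ 2, the number of Schröder paths of length n that are connected, whose first two steps are n, d, and which have no outer corners equals the number of plane rooted trees with n vertices, i.e., the Catalan number C_{n−1} = binomial(2n−2, n−1)/n. -/

import Mathlib

/-- An LLT graph: a directed graph with three kinds of edges. -/
structure LLTGraph (V : Type) where
  E1 : Finset (V × V)
  E2 : Finset (V × V)
  Ed : Finset (V × V)

/-- The variable `q`, viewed inside `ℤ[q][x₁,…,x_N]`. -/
noncomputable def lltQ (N : ℕ) : MvPolynomial (Fin N) (Polynomial ℤ) :=
  MvPolynomial.C Polynomial.X

/-- The LLT generating function of an LLT graph, read as a polynomial identity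
in `ℤ[q][x₁,…,x_N]`, colorings taking values in `{1,…,N}` (as `Fin N`). -/
noncomputable def LLT {V : Type} [Fintype V] [DecidableEq V] (G : LLTGraph V) (N : ℕ) :
    MvPolynomial (Fin N) (Polynomial ℤ) :=
  ∑ f : V → Fin N,
    ((∏ e ∈ G.E1, if f e.2 < f e.1 then 1 else 0) *
      (∏ e ∈ G.E2, if f e.2 ≤ f e.1 then 1 else 0) *
      (∏ e ∈ G.Ed,
        ((if f e.2 < f e.1 then lltQ N else 0) + (if f e.1 ≤ f e.2 then 1 else 0)))) *
    ∏ v : V, MvPolynomial.X (f v)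

/-- `K_n^⇒` : the complete LLT graph on `{1,…,n}` whose only edges are
double edges `i ⇒ j` for `i < j`. -/
def KnGraph (n : ℕ) : LLTGraph (Fin n) where
  E1 := ∅
  E2 := ∅
  Ed := Finset.univ.filter fun p => p.1 < p.2
/-- Steps of a Schröder path: north `(0,1)`, east `(1,0)`, diagonal `(1,1)`. -/
inductive SStep : Type
  | north : SStep
  | east  : SStep
  | diag  : SStep
deriving DecidableEq

/-- The displacement vector of a step. -/
def SStep.vec : SStep → ℕ × ℕ
  | .north => (0, 1)
  | .east  => (1, 0)
  | .diag  => (1, 1)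

/-- Endpoint of a path started at the origin `(0,0)`. -/
def endPt (P : List SStep) : ℕ × ℕ :=
  P.foldl (fun p s => (p.1 + s.vec.1, p.2 + s.vec.2)) (0, 0)

/-- The lattice point reached after the first `k` steps. -/
def posAt (P : List SStep) (k : ℕ) : ℕ × ℕ := endPt (P.take k)

/-- A Schröder path of length `n`: from `(0,0)` to `(n,n)`, never strictly below
the main diagonal, with no diagonal step starting on the main diagonal. -/
def IsSchroder (n : ℕ) (P : List SStep) : Prop :=
  endPt P = (n, n) ∧
  (∀ k, (posAt P k).1 ≤ (posAt P k).2) ∧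
  (∀ k, P[k]? = some SStep.diag → (posAt P k).1 < (posAt P k).2)

/-- The box `(i,j)` (unit square with corners `(i-1,j-1)` and `(i,j)`, `i,j ≥ 1`)
contains a diagonal step of `P`. -/
def hasDiagStep (P : List SStep) (i j : ℕ) : Prop :=
  ∃ k, P[k]? = some SStep.diag ∧ posAt P k = (i - 1, j - 1)

/-- The box `(i,j)` lies (weakly) below the path `P`. -/
def boxBelow (P : List SStep) (i j : ℕ) : Prop :=
  ∃ k, (posAt P k).1 ≤ i - 1 ∧ j ≤ (posAt P k).2

open Classical in
/-- The LLT graph `G_P` of a Schröder path `P` of length `n`; vertex `v : Fin n`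
represents the label `v+1`. -/
noncomputable def pathGraph (n : ℕ) (P : List SStep) : LLTGraph (Fin n) where
  E1 := Finset.univ.filter fun p => hasDiagStep P ((p.1 : ℕ) + 1) ((p.2 : ℕ) + 1)
  E2 := ∅
  Ed := Finset.univ.filter fun p =>
    (p.1 : ℕ) < (p.2 : ℕ) ∧ boxBelow P ((p.1 : ℕ) + 1) ((p.2 : ℕ) + 1) ∧
      ¬ hasDiagStep P ((p.1 : ℕ) + 1) ((p.2 : ℕ) + 1)

/-- The height `h(i)` of column `i` of `P`: the `y` such that `(i-1,y)` lies on `P`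
and is followed by an east or diagonal step. -/
noncomputable def colHeight (P : List SStep) (i : ℕ) : ℕ :=
  sSup {y | ∃ k, posAt P k = (i - 1, y) ∧
    (P[k]? = some SStep.east ∨ P[k]? = some SStep.diag)}

/-- The jump `j(i) = h(i+1) - h(i)` of column `i`. -/
noncomputable def jump (P : List SStep) (i : ℕ) : ℕ :=
  colHeight P (i + 1) - colHeight P i

open Classical in
/-- The set of columns `1 ≤ i ≤ n` of `P` containing a diagonal step. -/
noncomputable def diagCols (n : ℕ) (P : List SStep) : Finset ℕ :=
  (Finset.Icc 1 n).filter fun i =>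
    ∃ k, P[k]? = some SStep.diag ∧ (posAt P k).1 = i - 1

/-- `P` is connected: the only points of `P` on the main diagonal are `(0,0)` and `(n,n)`. -/
def ConnectedPath (n : ℕ) (P : List SStep) : Prop :=
  ∀ k, (posAt P k).1 = (posAt P k).2 → posAt P k = (0, 0) ∨ posAt P k = (n, n)

/-- The first two steps of `P` are north and diagonal. -/
def FirstStepsND (P : List SStep) : Prop :=
  P[0]? = some SStep.north ∧ P[1]? = some SStep.diag

/-- `P` has no outer corner: no point of `P` is followed by an east step and then
a north step. -/
def NoOuterCorner (P : List SStep) : Prop :=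
  ¬ ∃ k, P[k]? = some SStep.east ∧ P[k + 1]? = some SStep.north

/-- `P` has no outer corner lying strictly above the main diagonal. -/
def NoOuterCornerAboveDiag (P : List SStep) : Prop :=
  ¬ ∃ k, (posAt P k).1 < (posAt P k).2 ∧
    P[k]? = some SStep.east ∧ P[k + 1]? = some SStep.north

/-- Every connected component of `P` of length `≥ 2` begins with the steps north,
diagonal: from every point on the diagonal the path continues with a north step,
followed either by a diagonal step, or by an east step (a length-one component). -/
def ComponentsStartND (P : List SStep) : Prop :=
  ∀ k < P.length, (posAt P k).1 = (posAt P k).2 →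
    P[k]? = some SStep.north ∧
      (P[k + 1]? = some SStep.diag ∨ P[k + 1]? = some SStep.east)

/-!
Replacing `n ↦ U`, `e ↦ D`, `d ↦ DU` is a bijection from step sequences without a factor `en`
onto all words in `U, D` (decode by reading every `DU` as `d`). Since the `D` of a `d` step dips
one unit below its starting height, this carries Schröder paths of length `n` without outer
corners exactly onto Dyck words of semilength `n`, and those starting with `n d` onto the words
`UD w` with `w` a nonempty Dyck word of semilength `n - 1`. Connectedness comes for free: an
interior return to the diagonal must be entered by an `e` step and left by an `n` step, which
is an outer corner.
-/

namespace SchroderPath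

open DyckStep

theorem count_U_D_cons (L : List DyckStep) : (D :: L).count U = L.count U := by simp

theorem count_D_U_cons (L : List DyckStep) : (U :: L).count D = L.count D := by simp

def toDyck : List SStep → List DyckStep
  | [] => []
  | .north :: t => U :: toDyck t
  | .east :: t => D :: toDyck t
  | .diag :: t => D :: U :: toDyck t

def ofDyck : List DyckStep → List SStep
  | [] => []
  | U :: t => .north :: ofDyck t
  | [D] => [.east]
  | D :: U :: t => .diag :: ofDyck t
  | D :: D :: t => .east :: ofDyck (D :: t)

@[simp]
theorem toDyck_ofDyck (L : List DyckStep) : toDyck (ofDyck L) = L := by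
  induction L using ofDyck.induct <;> simp [ofDyck, toDyck, *]

theorem ofDyck_D_cons {L : List DyckStep} (h : L.head? ≠ some U) :
    ofDyck (D :: L) = .east :: ofDyck L := by
  match L, h with
  | [], _ => rfl
  | D :: _, _ => rfl

theorem noOuterCorner_cons {s : SStep} {Q : List SStep} :
    NoOuterCorner (s :: Q) ↔ ¬(s = .east ∧ Q.head? = some .north) ∧ NoOuterCorner Q := by
  unfold NoOuterCorner
  rw [← Nat.or_exists_add_one]
  rcases Q with _ | ⟨t, Q⟩ <;> simp

theorem ofDyck_toDyck {Q : List SStep} (h : NoOuterCorner Q) : ofDyck (toDyck Q) = Q := by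
  induction Q with
  | nil => rfl
  | cons s t ih =>
    rw [noOuterCorner_cons] at h
    cases s with
    | north => simp [toDyck, ofDyck, ih h.2]
    | diag => simp [toDyck, ofDyck, ih h.2]
    | east =>
      have hhead : (toDyck t).head? ≠ some U := by
        rcases t with _ | ⟨_ | _ | _, _⟩ <;> simp_all [toDyck]
      simp [toDyck, ofDyck_D_cons hhead, ih h.2]

theorem noOuterCorner_ofDyck (L : List DyckStep) : NoOuterCorner (ofDyck L) := by
  induction L using ofDyck.induct with
  | case1 => simp [NoOuterCorner, ofDyck]
  | case2 t ih => simpa [ofDyck, noOuterCorner_cons] using ih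
  | case3 => simp [NoOuterCorner, ofDyck]
  | case4 t ih => simpa [ofDyck, noOuterCorner_cons] using ih
  | case5 t ih =>
    refine noOuterCorner_cons.2 ⟨?_, ih⟩
    rcases t with _ | ⟨_ | _, _⟩ <;> simp [ofDyck]

theorem foldl_step_eq_add (p : ℕ × ℕ) (Q : List SStep) :
    Q.foldl (fun p s => (p.1 + s.vec.1, p.2 + s.vec.2)) p = p + endPt Q := by
  induction Q generalizing p with
  | nil => simp [endPt]
  | cons s Q ih =>
    rw [endPt, List.foldl_cons, List.foldl_cons, ih, ih]
    ext <;> simp <;> omega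

theorem endPt_cons (s : SStep) (Q : List SStep) : endPt (s :: Q) = s.vec + endPt Q := by
  rw [endPt, List.foldl_cons, foldl_step_eq_add]
  simp

theorem endPt_append (Q R : List SStep) : endPt (Q ++ R) = endPt Q + endPt R := by
  rw [endPt, List.foldl_append, foldl_step_eq_add]
  rfl

theorem posAt_succ {Q : List SStep} {k : ℕ} {s : SStep} (h : Q[k]? = some s) :
    posAt Q (k + 1) = posAt Q k + s.vec := by
  rw [posAt, posAt, List.take_add_one, h, Option.toList_some, endPt_append, endPt_cons]
  simp [endPt]

theorem endPt_eq_count (Q : List SStep) :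
    endPt Q = ((toDyck Q).count D, (toDyck Q).count U) := by
  induction Q with
  | nil => rfl
  | cons s Q ih =>
    rw [endPt_cons, ih]
    cases s <;> simp [toDyck, SStep.vec] <;> omega

/-- `c` is the height `y - x` of the starting point. -/
def StaysAbove (c : ℤ) (Q : List SStep) : Prop :=
  ∀ k, ((posAt Q k).1 : ℤ) ≤ c + (posAt Q k).2 ∧
    (Q[k]? = some .diag → ((posAt Q k).1 : ℤ) < c + (posAt Q k).2)

def DyckStaysAbove (c : ℤ) (L : List DyckStep) : Prop :=
  ∀ i, ((L.take i).count D : ℤ) ≤ c + (L.take i).count U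

theorem staysAbove_nil {c : ℤ} : StaysAbove c [] ↔ 0 ≤ c := by
  simp [StaysAbove, posAt, endPt]

theorem staysAbove_cons {c : ℤ} {s : SStep} {Q : List SStep} :
    StaysAbove c (s :: Q) ↔
      0 ≤ c ∧ (s = .diag → 0 < c) ∧ StaysAbove (c + s.vec.2 - s.vec.1) Q := by
  unfold StaysAbove
  rw [← Nat.and_forall_add_one]
  simp only [posAt, List.take_zero, List.take_succ_cons, endPt_cons, List.getElem?_cons_zero,
    List.getElem?_cons_succ, Option.some.injEq, Prod.fst_add, Prod.snd_add, Nat.cast_add]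
  simp only [endPt, List.foldl_nil, Nat.cast_zero, add_zero, and_assoc]
  refine and_congr_right fun _ => and_congr_right fun _ => forall_congr' fun k => ?_
  exact and_congr (by omega) (imp_congr_right fun _ => by omega)

theorem dyckStaysAbove_U_cons {c : ℤ} {L : List DyckStep} :
    DyckStaysAbove c (U :: L) ↔ 0 ≤ c ∧ DyckStaysAbove (c + 1) L := by
  unfold DyckStaysAbove
  rw [← Nat.and_forall_add_one]
  simp only [List.take_zero, List.count_nil, Nat.cast_zero, add_zero, List.take_succ_cons,
    List.count_cons_self, count_D_U_cons, Nat.cast_add, Nat.cast_one]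
  exact and_congr_right fun _ => forall_congr' fun i => by omega

theorem dyckStaysAbove_D_cons {c : ℤ} {L : List DyckStep} :
    DyckStaysAbove c (D :: L) ↔ 0 ≤ c ∧ DyckStaysAbove (c - 1) L := by
  unfold DyckStaysAbove
  rw [← Nat.and_forall_add_one]
  simp only [List.take_zero, List.count_nil, Nat.cast_zero, add_zero, List.take_succ_cons,
    List.count_cons_self, count_U_D_cons, Nat.cast_add, Nat.cast_one]
  exact and_congr_right fun _ => forall_congr' fun i => by omega

theorem dyckStaysAbove_nil {c : ℤ} : DyckStaysAbove c [] ↔ 0 ≤ c := by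
  simp [DyckStaysAbove]

theorem staysAbove_iff_dyckStaysAbove (c : ℤ) (Q : List SStep) :
    StaysAbove c Q ↔ DyckStaysAbove c (toDyck Q) := by
  induction Q generalizing c with
  | nil => rw [staysAbove_nil, toDyck, dyckStaysAbove_nil]
  | cons s Q ih =>
    cases s <;>
      simp [staysAbove_cons, toDyck, dyckStaysAbove_U_cons, dyckStaysAbove_D_cons, ih, SStep.vec,
        Int.lt_iff_add_one_le]

theorem isSchroder_iff {n : ℕ} {Q : List SStep} :
    IsSchroder n Q ↔
      (toDyck Q).count U = n ∧ (toDyck Q).count D = n ∧ DyckStaysAbove 0 (toDyck Q) := by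
  rw [IsSchroder, endPt_eq_count, ← staysAbove_iff_dyckStaysAbove, StaysAbove]
  simp only [zero_add, Nat.cast_le, Nat.cast_lt, Prod.mk.injEq, forall_and]
  tauto

theorem connectedPath_of_noOuterCorner {n : ℕ} {Q : List SStep} (hS : IsSchroder n Q)
    (hQ : NoOuterCorner Q) : ConnectedPath n Q := by
  obtain ⟨hend, habove, hdiag⟩ := hS
  intro k hk
  rcases Nat.eq_zero_or_pos k with rfl | hk0
  · exact Or.inl rfl
  rcases le_or_gt Q.length k with hlen | hlen
  · exact Or.inr (by rw [posAt, List.take_of_length_le hlen, hend])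
  exfalso
  obtain ⟨j, rfl⟩ : ∃ j, k = j + 1 := Nat.exists_eq_add_one.2 hk0
  have hs : Q[j + 1]? = some Q[j + 1] := List.getElem?_eq_getElem hlen
  have hs' : Q[j]? = some Q[j] := List.getElem?_eq_getElem (by omega)
  have hnext := posAt_succ hs
  have hprev := posAt_succ hs'
  have h1 := habove (j + 1 + 1)
  have h2 := habove j
  rw [Prod.ext_iff] at hnext hprev
  cases h : Q[j + 1] with
  | east => simp only [h, SStep.vec, Prod.fst_add, Prod.snd_add] at hnext; omega
  | diag => exact absurd (hdiag (j + 1) (h ▸ hs)) (by omega)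
  | north =>
    cases h' : Q[j] with
    | north => simp only [h', SStep.vec, Prod.fst_add, Prod.snd_add] at hprev; omega
    | diag =>
      have := hdiag j (h' ▸ hs')
      simp only [h', SStep.vec, Prod.fst_add, Prod.snd_add] at hprev; omega
    | east => exact hQ ⟨j, h' ▸ hs', h ▸ hs⟩

theorem firstStepsND_iff {P : List SStep} :
    FirstStepsND P ↔ ∃ T, P = .north :: .diag :: T := by
  constructor
  · intro h
    rcases P with _ | ⟨a, _ | ⟨b, T⟩⟩ <;> simp_all [FirstStepsND]
  · rintro ⟨T, rfl⟩
    simp [FirstStepsND]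

theorem dyckStaysAbove_U_D_cons {L : List DyckStep} :
    DyckStaysAbove 0 (U :: D :: L) ↔ DyckStaysAbove 0 L := by
  simp [dyckStaysAbove_U_cons, dyckStaysAbove_D_cons]

theorem exists_dyckWord_of_isSchroder {n : ℕ} {P : List SStep} (hS : IsSchroder n P)
    (hF : FirstStepsND P) :
    ∃ w : DyckWord, toDyck P = U :: D :: w.toList ∧ w.semilength = n - 1 := by
  obtain ⟨T, rfl⟩ := firstStepsND_iff.1 hF
  obtain ⟨hU, hD, habove⟩ := isSchroder_iff.1 hS
  have hL : toDyck (.north :: .diag :: T) = U :: D :: U :: toDyck T := rfl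
  rw [hL] at hU hD habove
  rw [dyckStaysAbove_U_D_cons] at habove
  simp only [List.count_cons_self, count_U_D_cons, count_D_U_cons] at hU hD
  refine ⟨⟨U :: toDyck T, by simp only [List.count_cons_self, count_D_U_cons]; omega, fun i => by
    have := habove i
    rw [zero_add] at this
    exact_mod_cast this⟩, rfl, ?_⟩
  simp only [DyckWord.semilength, List.count_cons_self]
  omega

theorem ofDyck_U_D_cons_spec {n : ℕ} (hn : 2 ≤ n) (w : DyckWord) (hw : w.semilength = n - 1) :
    let P := ofDyck (U :: D :: w.toList)
    IsSchroder n P ∧ ConnectedPath n P ∧ FirstStepsND P ∧ NoOuterCorner P := by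
  intro P
  have hU : w.toList.count U = n - 1 := hw
  have hD : w.toList.count D = n - 1 := w.semilength_eq_count_D ▸ hw
  have hS : IsSchroder n P := by
    rw [isSchroder_iff, toDyck_ofDyck, dyckStaysAbove_U_D_cons]
    simp only [List.count_cons_self, count_U_D_cons, count_D_U_cons, hU, hD]
    refine ⟨by omega, by omega, fun i => ?_⟩
    rw [zero_add]
    exact_mod_cast w.count_D_le_count_U i
  have hQ : NoOuterCorner P := noOuterCorner_ofDyck _
  have hw0 : w ≠ 0 := by
    rintro rfl
    rw [DyckWord.semilength_zero] at hw
    omega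
  obtain ⟨rest, hrest⟩ : ∃ rest, w.toList = U :: rest :=
    ⟨_, (DyckWord.cons_tail_dropLast_concat hw0).symm⟩
  have hF : FirstStepsND P := firstStepsND_iff.2 ⟨ofDyck rest, by simp only [P, hrest]; rfl⟩
  exact ⟨hS, connectedPath_of_noOuterCorner hS hQ, hF, hQ⟩

noncomputable def ofDyckWord {n : ℕ} (hn : 2 ≤ n) (w : {w : DyckWord // w.semilength = n - 1}) :
    {P : List SStep // IsSchroder n P ∧ ConnectedPath n P ∧ FirstStepsND P ∧ NoOuterCorner P} :=
  ⟨ofDyck (U :: D :: w.1.toList), ofDyck_U_D_cons_spec hn w.1 w.2⟩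

theorem ofDyckWord_bijective {n : ℕ} (hn : 2 ≤ n) : Function.Bijective (ofDyckWord hn) := by
  constructor
  · rintro ⟨w₁, _⟩ ⟨w₂, _⟩ h
    have h' := congrArg (fun P => toDyck P.1) h
    simp only [ofDyckWord, toDyck_ofDyck, List.cons.injEq, true_and] at h'
    exact Subtype.ext (DyckWord.ext h')
  · rintro ⟨P, hS, -, hF, hQ⟩
    obtain ⟨w, hw, hlen⟩ := exists_dyckWord_of_isSchroder hS hF
    exact ⟨⟨w, hlen⟩, Subtype.ext ((congrArg ofDyck hw).symm.trans (ofDyck_toDyck hQ))⟩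

end SchroderPath

/-- For `n ≥ 2`, the number of connected Schröder paths of
length `n` whose first two steps are north, diagonal and which have no outer
corners equals the number of plane rooted trees with `n` vertices, i.e. the
Catalan number `C_{n−1} = binomial(2n−2, n−1)/n`. -/
theorem card_schroder_eq_catalan (n : ℕ) (hn : 2 ≤ n) :
    Nat.card {P : List SStep // IsSchroder n P ∧ ConnectedPath n P ∧
        FirstStepsND P ∧ NoOuterCorner P} = catalan (n - 1) ∧
    catalan (n - 1) = (2 * n - 2).choose (n - 1) / n := by
  constructor
  · rw [← Nat.card_congr (Equiv.ofBijective _ (SchroderPath.ofDyckWord_bijective hn)), Nat.card_eq_fintype_card,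
      DyckWord.card_dyckWord_semilength_eq_catalan]
  · obtain ⟨m, rfl⟩ : ∃ m, n = m + 1 := ⟨n - 1, by omega⟩
    rw [catalan_eq_centralBinom_div, Nat.centralBinom, Nat.add_sub_cancel]
    congr 2
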